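/- Let X₁ ⊆ X₀ and Y₁ ⊆ Y₀ be normed spaces, 0 < α ≤ 1, β > 0 with β ≥ α, and let T : X₀ → Y₀ satisfy ‖Ta − Tb‖_{Y₀} ≤ f(‖a‖_{X₀}, ‖b‖_{X₀}) ‖a − b‖_{X₀}^α for all a,b ∈ X₀ and ‖Ta‖_{Y₁} ≤ g(‖a‖_{X₀}) ‖a‖_{X₁}^β for all a ∈ X₁, where g is continuous increasing on ℝ₊ and f is continuous on ℝ₊² and increasing in each variable. Set G(σ) = max{g(2σ), f(σ, 2σ)}. Then for every a ∈ X₀ and t > 0, K(Ta, t^β; Y₀, Y₁) ≤ G(‖a‖_{X₀}) (1 + ‖a‖_{X₀}^{β−α}) [K(a, t; X₀, X₁)]^α. -/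

import Mathlib

open Real

/-- The Peetre K-functional for the couple `(X₀, X₁)`, where `X₁` is embedded
in `X₀` via the additive map `j`. -/
noncomputable def Kfunc {X₀ X₁ : Type*} [NormedAddCommGroup X₀] [NormedAddCommGroup X₁]
    (j : X₁ →+ X₀) (a : X₀) (t : ℝ) : ℝ :=
  sInf {r : ℝ | ∃ a₁ : X₁, r = ‖a - j a₁‖ + t * ‖a₁‖}

/-!
A decomposition `a = (a - j a₁) + j a₁` of `a` into its two components is mapped to the
decomposition `T₀ a = (T₀ a - T₀ (j a₁)) + T₁ a₁` of `T₀ a`; the Hölder bound controls the first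
piece and the growth bound on `T₁` the second. Only decompositions of cost at most `‖a‖` matter
(the trivial one `a = a + 0` beats all others), and for those `‖j a₁‖ ≤ 2‖a‖` and
`(t‖a₁‖)^β ≤ ‖a‖^(β-α) (t‖a₁‖)^α`. Taking the infimum over decompositions gives the estimate.
-/

theorem rpow_add_rpow_le_mul_rpow_add {x₀ x₁ σ α β : ℝ} (hx₀ : 0 ≤ x₀) (hx₁ : 0 ≤ x₁)
    (hσ : x₀ + x₁ ≤ σ) (hα : 0 ≤ α) (hαβ : α ≤ β) :
    x₀ ^ α + x₁ ^ β ≤ (1 + σ ^ (β - α)) * (x₀ + x₁) ^ α := by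
  have hβ : x₁ ^ β = x₁ ^ (β - α) * x₁ ^ α := by
    rw [← rpow_add_of_nonneg hx₁ (sub_nonneg.2 hαβ) hα, sub_add_cancel]
  have h₀ : x₀ ^ α ≤ (x₀ + x₁) ^ α := by gcongr; linarith
  have h₁ : x₁ ^ β ≤ σ ^ (β - α) * (x₀ + x₁) ^ α := by
    rw [hβ]
    have hx₁σ : x₁ ≤ σ := by linarith
    gcongr
    · exact rpow_nonneg (hx₁.trans hx₁σ) _
    · linarith
  linarith

theorem le_mul_rpow_csInf {s : Set ℝ} (hs : s.Nonempty) (hs₀ : ∀ r ∈ s, 0 ≤ r) {B C p : ℝ}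
    (hC : 0 ≤ C) (hp : 0 ≤ p) (hB : ∀ r ∈ s, B ≤ C * r ^ p) : B ≤ C * sInf s ^ p := by
  have hmono : MonotoneOn (fun r : ℝ => C * r ^ p) s := fun x hx y _ hxy =>
    mul_le_mul_of_nonneg_left (rpow_le_rpow (hs₀ x hx) hxy hp) hC
  have hcont : Continuous fun r : ℝ => C * r ^ p := continuous_const.mul (continuous_rpow_const hp)
  rw [hmono.map_csInf_of_continuousWithinAt hcont.continuousWithinAt hs ⟨0, hs₀⟩]
  exact le_csInf (hs.image _) (Set.forall_mem_image.2 hB)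

section KFunctional

variable {X₀ X₁ : Type*} [NormedAddCommGroup X₀] [NormedAddCommGroup X₁] (j : X₁ →+ X₀)

theorem Kfunc_nonneg (a : X₀) {t : ℝ} (ht : 0 ≤ t) : 0 ≤ Kfunc j a t :=
  le_csInf ⟨_, 0, rfl⟩ (by rintro r ⟨a₁, rfl⟩; positivity)

theorem Kfunc_le (a : X₀) {t : ℝ} (ht : 0 ≤ t) (a₁ : X₁) :
    Kfunc j a t ≤ ‖a - j a₁‖ + t * ‖a₁‖ :=
  csInf_le ⟨0, by rintro r ⟨a₁, rfl⟩; positivity⟩ ⟨a₁, rfl⟩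

theorem Kfunc_le_norm (a : X₀) {t : ℝ} (ht : 0 ≤ t) : Kfunc j a t ≤ ‖a‖ := by
  simpa using Kfunc_le j a ht 0

theorem Kfunc_zero {t : ℝ} (ht : 0 ≤ t) : Kfunc j 0 t = 0 :=
  le_antisymm (by simpa using Kfunc_le_norm j 0 ht) (Kfunc_nonneg j 0 ht)

theorem le_mul_Kfunc_rpow (a : X₀) {t B C p : ℝ} (ht : 0 ≤ t) (hC : 0 ≤ C) (hp : 0 ≤ p)
    (hB : ∀ a₁ : X₁, ‖a - j a₁‖ + t * ‖a₁‖ ≤ ‖a‖ →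
      B ≤ C * (‖a - j a₁‖ + t * ‖a₁‖) ^ p) :
    B ≤ C * Kfunc j a t ^ p := by
  unfold Kfunc
  refine le_mul_rpow_csInf ?_ ?_ hC hp ?_
  · exact ⟨_, 0, rfl⟩
  · rintro r ⟨a₁, rfl⟩; positivity
  rintro r ⟨a₁, rfl⟩
  rcases le_or_gt (‖a - j a₁‖ + t * ‖a₁‖) ‖a‖ with hcheap | hcostly
  · exact hB a₁ hcheap
  · calc B ≤ C * ‖a‖ ^ p := by simpa using hB 0 (by simp)
      _ ≤ C * (‖a - j a₁‖ + t * ‖a₁‖) ^ p := by gcongr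

end KFunctional

theorem norm_sub_add_le_of_holder {X₀ X₁ Y₀ Y₁ : Type*}
    [NormedAddCommGroup X₀] [NormedAddCommGroup X₁]
    [NormedAddCommGroup Y₀] [NormedAddCommGroup Y₁]
    (jX : X₁ →+ X₀) (jY : Y₁ →+ Y₀) {α β t : ℝ} (hα : 0 ≤ α) (hαβ : α ≤ β) (ht : 0 ≤ t)
    (T₀ : X₀ → Y₀) (T₁ : X₁ → Y₁) (hcompat : ∀ a : X₁, jY (T₁ a) = T₀ (jX a))
    (f : ℝ → ℝ → ℝ) (g : ℝ → ℝ) (hg_mono : Monotone g) (hf_mono : ∀ σ : ℝ, Monotone (f σ))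
    (h1 : ∀ a b : X₀, ‖T₀ a - T₀ b‖ ≤ f ‖a‖ ‖b‖ * ‖a - b‖ ^ α)
    (h2 : ∀ a : X₁, ‖T₁ a‖ ≤ g ‖jX a‖ * ‖a‖ ^ β)
    {a : X₀} {a₁ : X₁} (hcheap : ‖a - jX a₁‖ + t * ‖a₁‖ ≤ ‖a‖)
    {M : ℝ} (hM : 0 ≤ M) (hgM : g (2 * ‖a‖) ≤ M) (hfM : f ‖a‖ (2 * ‖a‖) ≤ M) :
    ‖T₀ a - jY (T₁ a₁)‖ + t ^ β * ‖T₁ a₁‖ ≤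
      M * (1 + ‖a‖ ^ (β - α)) * (‖a - jX a₁‖ + t * ‖a₁‖) ^ α := by
  have hja₁ : ‖jX a₁‖ ≤ 2 * ‖a‖ := by
    have := norm_le_norm_add_norm_sub a (jX a₁)
    have : 0 ≤ t * ‖a₁‖ := by positivity
    linarith
  have hT₀ : ‖T₀ a - T₀ (jX a₁)‖ ≤ M * ‖a - jX a₁‖ ^ α :=
    calc ‖T₀ a - T₀ (jX a₁)‖ ≤ f ‖a‖ ‖jX a₁‖ * ‖a - jX a₁‖ ^ α := h1 a (jX a₁)
      _ ≤ M * ‖a - jX a₁‖ ^ α := by gcongr; exact (hf_mono _ hja₁).trans hfM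
  have hT₁ : t ^ β * ‖T₁ a₁‖ ≤ M * (t * ‖a₁‖) ^ β :=
    calc t ^ β * ‖T₁ a₁‖ ≤ t ^ β * (g ‖jX a₁‖ * ‖a₁‖ ^ β) := by gcongr; exact h2 a₁
      _ = g ‖jX a₁‖ * (t * ‖a₁‖) ^ β := by rw [mul_rpow ht (norm_nonneg _)]; ring
      _ ≤ M * (t * ‖a₁‖) ^ β := by gcongr; exact (hg_mono hja₁).trans hgM
  have hsum := rpow_add_rpow_le_mul_rpow_add (norm_nonneg (a - jX a₁))
    (mul_nonneg ht (norm_nonneg a₁)) hcheap hα hαβ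
  rw [hcompat]
  calc ‖T₀ a - T₀ (jX a₁)‖ + t ^ β * ‖T₁ a₁‖
      ≤ M * (‖a - jX a₁‖ ^ α + (t * ‖a₁‖) ^ β) := by linarith
    _ ≤ M * (1 + ‖a‖ ^ (β - α)) * (‖a - jX a₁‖ + t * ‖a₁‖) ^ α := by
      rw [mul_assoc]; gcongr

theorem Kfunc_estimate_of_holder_general
    {X₀ X₁ Y₀ Y₁ : Type*}
    [NormedAddCommGroup X₀] [NormedAddCommGroup X₁]
    [NormedAddCommGroup Y₀] [NormedAddCommGroup Y₁]
    (jX : X₁ →+ X₀) (jY : Y₁ →+ Y₀)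
    (α β : ℝ) (hα0 : 0 < α) (hβ : 0 < β) (hβα : α ≤ β)
    (T₀ : X₀ → Y₀) (T₁ : X₁ → Y₁)
    (hcompat : ∀ a : X₁, jY (T₁ a) = T₀ (jX a))
    (f : ℝ → ℝ → ℝ) (g : ℝ → ℝ)
    (hg_mono : Monotone g)
    (hf_mono : ∀ σ : ℝ, Monotone (f σ))
    (h1 : ∀ a b : X₀, ‖T₀ a - T₀ b‖ ≤ f ‖a‖ ‖b‖ * ‖a - b‖ ^ α)
    (h2 : ∀ a : X₁, ‖T₁ a‖ ≤ g ‖jX a‖ * ‖a‖ ^ β)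
    (G : ℝ → ℝ) (hG : ∀ σ, G σ = max (g (2 * σ)) (f σ (2 * σ))) :
    ∀ (a : X₀) (t : ℝ), 0 < t →
      Kfunc jY (T₀ a) (t ^ β) ≤
        G ‖a‖ * (1 + ‖a‖ ^ (β - α)) * (Kfunc jX a t) ^ α := by
  intro a t ht
  rcases eq_or_ne a 0 with rfl | ha
  -- nothing forces `G 0 ≥ 0`, but here both sides vanish
  · have hT₁ : T₁ 0 = 0 := norm_le_zero_iff.1 (by simpa [zero_rpow hβ.ne'] using h2 0)
    have hT₀ : T₀ 0 = 0 := by simpa [hT₁] using (hcompat 0).symm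
    rw [hT₀, Kfunc_zero jY (by positivity), Kfunc_zero jX ht.le, zero_rpow hα0.ne', mul_zero]
  · have hf₀ : 0 ≤ f ‖a‖ 0 :=
      nonneg_of_mul_nonneg_left (by simpa using (norm_nonneg _).trans (h1 a 0))
        (rpow_pos_of_pos (norm_pos_iff.2 ha) α)
    have hG₀ : 0 ≤ G ‖a‖ := by
      rw [hG]
      exact hf₀.trans ((hf_mono _ (by positivity)).trans (le_max_right _ _))
    refine le_mul_Kfunc_rpow jX a ht.le (by positivity) hα0.le fun a₁ hcheap => ?_
    refine (Kfunc_le jY _ (by positivity) (T₁ a₁)).trans ?_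
    exact norm_sub_add_le_of_holder jX jY hα0.le hβα ht.le T₀ T₁ hcompat f g hg_mono hf_mono h1 h2
      hcheap hG₀ ((le_max_left _ _).trans_eq (hG _).symm) ((le_max_right _ _).trans_eq (hG _).symm)

/-- Tartar-type estimate on the K-functional of `T a`: if `T` satisfies
`‖Ta - Tb‖_{Y₀} ≤ f(‖a‖,‖b‖)‖a-b‖^α` and `‖Ta‖_{Y₁} ≤ g(‖a‖_{X₀})‖a‖_{X₁}^β`
with `β ≥ α`, then `K(Ta, t^β) ≤ G(‖a‖)(1+‖a‖^{β-α}) K(a,t)^α`,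
where `G(σ) = max (g (2σ)) (f σ (2σ))`. -/
theorem Kfunc_estimate_of_holder
    {X₀ X₁ Y₀ Y₁ : Type*}
    [NormedAddCommGroup X₀] [NormedAddCommGroup X₁]
    [NormedAddCommGroup Y₀] [NormedAddCommGroup Y₁]
    (jX : X₁ →+ X₀) (jY : Y₁ →+ Y₀)
    (α β : ℝ) (hα0 : 0 < α) (hα1 : α ≤ 1) (hβ : 0 < β) (hβα : α ≤ β)
    (T₀ : X₀ → Y₀) (T₁ : X₁ → Y₁)
    (hcompat : ∀ a : X₁, jY (T₁ a) = T₀ (jX a))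
    (f : ℝ → ℝ → ℝ) (g : ℝ → ℝ)
    (hg_cont : Continuous g) (hg_mono : Monotone g)
    (hf_cont : Continuous (fun σ : ℝ × ℝ => f σ.1 σ.2))
    (hf_mono : ∀ σ : ℝ, Monotone (f σ)) (hf_mono' : ∀ τ : ℝ, Monotone (fun σ => f σ τ))
    (h1 : ∀ a b : X₀, ‖T₀ a - T₀ b‖ ≤ f ‖a‖ ‖b‖ * ‖a - b‖ ^ α)
    (h2 : ∀ a : X₁, ‖T₁ a‖ ≤ g ‖jX a‖ * ‖a‖ ^ β)
    (G : ℝ → ℝ) (hG : ∀ σ, G σ = max (g (2 * σ)) (f σ (2 * σ))) :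
    ∀ (a : X₀) (t : ℝ), 0 < t →
      Kfunc jY (T₀ a) (t ^ β) ≤
        G ‖a‖ * (1 + ‖a‖ ^ (β - α)) * (Kfunc jX a t) ^ α :=
  Kfunc_estimate_of_holder_general jX jY α β hα0 hβ hβα T₀ T₁ hcompat f g hg_mono hf_mono h1 h2 G hG
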